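/- arXiv:1709.00177 — 5 statements merged into one kernel-verified Lean document; each statement's English description precedes it below -/
import Mathlib

section
/- The almost Hermitian structure (J, ḡ) on S⁶ induced by octonion cross product is nearly Kähler: (∇̄_X J)Y = -(∇̄_Y J)X for all vector fields X, Y on S⁶, where ∇̄ is the Levi-Civita connection of the round metric ḡ. -/
/- Common setup: ℝ⁷ ≅ pure imaginary octonions 𝔆₊ (0-based indices: eᵢ ↦ i-1),
   octonion cross product x × y = xy + ⟨x,y⟩·1 given by the Fano triples
   (e₁e₂=e₃, e₁e₄=e₅, e₁e₆=e₇, e₂e₅=e₇, e₃e₄=e₇, e₃e₅=e₆, e₂e₆=e₄),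
   the hypersurfaces M_r = S⁶ ∩ {x₇ = r}, the unit normal ν of M_r in S⁶,
   the vector field ξ = -N × ν, its dual 1-form η and dη
   (with the convention dη(X,Y) = ½(Xη(Y) - Yη(X) - η([X,Y]))). -/

noncomputable section

open scoped RealInnerProductSpace

abbrev E7 : Type := EuclideanSpace ℝ (Fin 7)
abbrev E6 : Type := EuclideanSpace ℝ (Fin 6)

/-- Octonion cross product on pure imaginary octonions 𝔆₊ ≅ ℝ⁷. -/
def cross (u v : E7) : E7 := WithLp.toLp 2 fun k =>
  if k = 0 then u 1 * v 2 - u 2 * v 1 + (u 3 * v 4 - u 4 * v 3) + (u 5 * v 6 - u 6 * v 5)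
  else if k = 1 then u 2 * v 0 - u 0 * v 2 + (u 4 * v 6 - u 6 * v 4) + (u 5 * v 3 - u 3 * v 5)
  else if k = 2 then u 0 * v 1 - u 1 * v 0 + (u 3 * v 6 - u 6 * v 3) + (u 4 * v 5 - u 5 * v 4)
  else if k = 3 then u 4 * v 0 - u 0 * v 4 + (u 6 * v 2 - u 2 * v 6) + (u 1 * v 5 - u 5 * v 1)
  else if k = 4 then u 0 * v 3 - u 3 * v 0 + (u 6 * v 1 - u 1 * v 6) + (u 5 * v 2 - u 2 * v 5)
  else if k = 5 then u 6 * v 0 - u 0 * v 6 + (u 2 * v 4 - u 4 * v 2) + (u 3 * v 1 - u 1 * v 3)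
  else u 0 * v 5 - u 5 * v 0 + (u 1 * v 4 - u 4 * v 1) + (u 2 * v 3 - u 3 * v 2)

/-- The hypersurface M_r = S⁶ ∩ {x₇ = r} = {Σᵢ₌₁⁶ xᵢeᵢ + re₇ : Σᵢ₌₁⁶ xᵢ² = 1 - r²}. -/
def Mr (r : ℝ) : Set E7 := {x | x 6 = r ∧ ∑ i : Fin 6, x i.castSucc ^ 2 = 1 - r ^ 2}

/-- The unit normal ν of M_r in S⁶ : ν_x = (r/√(1-r²)) Σᵢ₌₁⁶ xᵢeᵢ - √(1-r²) e₇. -/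
def nu (r : ℝ) (x : E7) : E7 := WithLp.toLp 2 fun i =>
  if i = 6 then -Real.sqrt (1 - r ^ 2) else (r / Real.sqrt (1 - r ^ 2)) * x i

/-- ξ = -N × ν = (1/√(1-r²))(x₆e₁ + x₅e₂ + x₄e₃ - x₃e₄ - x₂e₅ - x₁e₆). -/
def xi (r : ℝ) (x : E7) : E7 := WithLp.toLp 2 fun i =>
  (1 / Real.sqrt (1 - r ^ 2)) *
    (if i = 0 then x 5 else if i = 1 then x 4 else if i = 2 then x 3
     else if i = 3 then -x 2 else if i = 4 then -x 1 else if i = 5 then -x 0 else 0)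

/-- The 1-form η dual to ξ:
η = (1/√(1-r²))(x₆dx₁ + x₅dx₂ + x₄dx₃ - x₃dx₄ - x₂dx₅ - x₁dx₆). -/
def eta (r : ℝ) (x v : E7) : ℝ :=
  (1 / Real.sqrt (1 - r ^ 2)) *
    (x 5 * v 0 + x 4 * v 1 + x 3 * v 2 - x 2 * v 3 - x 1 * v 4 - x 0 * v 5)

/-- dη = -(2/√(1-r²))(dx₁∧dx₆ + dx₂∧dx₅ + dx₃∧dx₄), with the convention
dη(X,Y) = ½(Xη(Y) - Yη(X) - η([X,Y])), i.e. (dxᵢ∧dxⱼ)(u,v) = ½(uᵢvⱼ - uⱼvᵢ). -/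
def deta (r : ℝ) (u v : E7) : ℝ :=
  -(1 / Real.sqrt (1 - r ^ 2)) *
    (u 0 * v 5 - u 5 * v 0 + (u 1 * v 4 - u 4 * v 1) + (u 2 * v 3 - u 3 * v 2))

/-- The tangent space T_xM_r = {v : v₇ = 0, ⟨v,x⟩ = 0} (as a predicate). -/
def TangentMr (x v : E7) : Prop := v 6 = 0 ∧ ⟪v, x⟫ = 0

/-- Tangential projection onto T_xS⁶ (for x ∈ S⁶), giving the Levi-Civita
covariant derivative of the round sphere: ∇̄_u W = P_x(D_u W). -/
def sphProj (x v : E7) : E7 := v - ⟪v, x⟫ • x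

lemma oc_add_left (u u' v : E7) : cross (u + u') v = cross u v + cross u' v := by
  ext k; fin_cases k <;> simp [cross, PiLp.add_apply] <;> ring
lemma oc_smul_left (c : ℝ) (u v : E7) : cross (c • u) v = c • cross u v := by
  ext k; fin_cases k <;> simp [cross, PiLp.smul_apply, smul_eq_mul] <;> ring
lemma oc_add_right (u v v' : E7) : cross u (v + v') = cross u v + cross u v' := by
  ext k; fin_cases k <;> simp [cross, PiLp.add_apply] <;> ring
lemma oc_smul_right (c : ℝ) (u v : E7) : cross u (c • v) = c • cross u v := by
  ext k; fin_cases k <;> simp [cross, PiLp.smul_apply, smul_eq_mul] <;> ring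
lemma oc_anti (u v : E7) : cross v u = -cross u v := by
  ext k; fin_cases k <;> simp [cross, PiLp.neg_apply] <;> ring
lemma oc_self (u : E7) : cross u u = 0 := by
  ext k; fin_cases k <;> simp [cross] <;> ring
lemma inner_oc_self (u v : E7) : ⟪cross u v, u⟫ = 0 := by
  simp [PiLp.inner_apply, Fin.sum_univ_seven, cross]; ring

def crossl (u : E7) : E7 →L[ℝ] E7 :=
  LinearMap.toContinuousLinearMap
    { toFun := cross u
      map_add' := fun v v' => oc_add_right u v v'
      map_smul' := fun c v => oc_smul_right c u v }

@[simp] lemma crossl_apply (u v : E7) : crossl u v = cross u v := rfl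

def crossL : E7 →L[ℝ] (E7 →L[ℝ] E7) :=
  LinearMap.toContinuousLinearMap
    { toFun := crossl
      map_add' := fun u u' => by
        ext v : 1
        simp [oc_add_left]
      map_smul' := fun c u => by
        ext v : 1
        simp [oc_smul_left] }

@[simp] lemma crossL_apply (u v : E7) : crossL u v = cross u v := rfl

lemma key_fderiv (X Y : E7 → E7) (hY : ContDiff ℝ (⊤ : ℕ∞) Y) (x : E7) :
    fderiv ℝ (fun z => cross z (Y z)) x (X x)
      = cross x (fderiv ℝ Y x (X x)) + cross (X x) (Y x) := by
  have hYd : HasFDerivAt Y (fderiv ℝ Y x) x :=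
    ((hY.differentiable (by simp)) x).hasFDerivAt
  have hc : HasFDerivAt (fun z => crossL z (Y z))
      ((crossL x).comp (fderiv ℝ Y x) + crossL.flip (Y x)) x :=
    (crossL.hasFDerivAt).clm_apply hYd
  have : fderiv ℝ (fun z => cross z (Y z)) x
      = (crossL x).comp (fderiv ℝ Y x) + crossL.flip (Y x) := hc.fderiv
  rw [this]
  simp [ContinuousLinearMap.add_apply]

lemma oc_sub_right (u v v' : E7) : cross u (v - v') = cross u v - cross u v' := by
  ext k; fin_cases k <;> simp [cross, PiLp.sub_apply] <;> ring


/-- the almost Hermitian structure (J, ḡ) on S⁶, J_x y = x × y,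
is nearly Kähler: (∇̄_X J)Y = -(∇̄_Y J)X for all vector fields X, Y tangent
along S⁶, where (∇̄_X J)Y = ∇̄_X(JY) - J(∇̄_X Y) and ∇̄ is the Levi-Civita
connection of the round metric (tangential projection of the flat derivative). -/
theorem stmt2 (X Y : E7 → E7) (hX : ContDiff ℝ (⊤ : ℕ∞) X) (hY : ContDiff ℝ (⊤ : ℕ∞) Y)
    (hXt : ∀ x : E7, ‖x‖ = 1 → ⟪X x, x⟫ = 0) (hYt : ∀ x : E7, ‖x‖ = 1 → ⟪Y x, x⟫ = 0)
    (x : E7) (hx : ‖x‖ = 1) :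
    sphProj x (fderiv ℝ (fun z => cross z (Y z)) x (X x))
        - cross x (sphProj x (fderiv ℝ Y x (X x)))
      = -(sphProj x (fderiv ℝ (fun z => cross z (X z)) x (Y x))
        - cross x (sphProj x (fderiv ℝ X x (Y x)))) := by
  rw [key_fderiv X Y hY x, key_fderiv Y X hX x]
  simp only [sphProj, oc_sub_right, oc_smul_right, oc_self, smul_zero, sub_zero,
    inner_add_left, inner_oc_self, zero_add]
  rw [oc_anti (X x) (Y x), inner_neg_left]
  module
end
end

section
/- On M_r, the vector field ξ = -N × ν (where N is the position vector and × the octonion cross product) equals (1/√(1-r²))(x₆e₁ + x₅e₂ + x₄e₃ - x₃e₄ - x₂e₅ - x₁e₆), and ξ is a unit vector field tangent to M_r orthogonal to ν. -/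
/- Common setup: ℝ⁷ ≅ pure imaginary octonions 𝔆₊ (0-based indices: eᵢ ↦ i-1),
   octonion cross product x × y = xy + ⟨x,y⟩·1 given by the Fano triples
   (e₁e₂=e₃, e₁e₄=e₅, e₁e₆=e₇, e₂e₅=e₇, e₃e₄=e₇, e₃e₅=e₆, e₂e₆=e₄),
   the hypersurfaces M_r = S⁶ ∩ {x₇ = r}, the unit normal ν of M_r in S⁶,
   the vector field ξ = -N × ν, its dual 1-form η and dη
   (with the convention dη(X,Y) = ½(Xη(Y) - Yη(X) - η([X,Y]))). -/

noncomputable section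

open scoped RealInnerProductSpace

/- Write s = √(1 - r²) and x' for the ℝ⁶-part of x ∈ M_r, so that x = x' + r e₇ and
ν = (r/s) x' - s e₇. As x' × x' = 0, only the e₇-terms survive in the cross product:
N × ν = -(s + r²/s) x' × e₇ = -(1/s) x' × e₇, using s² + r² = 1. Right multiplication by
e₇ is the complex structure x' ↦ (x₆, x₅, x₄, -x₃, -x₂, -x₁) on ℝ⁶, a skew isometry, so ξ
has norm |x'|/s = 1 and is orthogonal to both x' and e₇, hence to x and ν. -/

lemma inner_eq_sum_seven (u v : E7) :
    ⟪u, v⟫ =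
      u 0 * v 0 + u 1 * v 1 + u 2 * v 2 + u 3 * v 3 + u 4 * v 4 + u 5 * v 5 + u 6 * v 6 := by
  simp only [PiLp.inner_apply, RCLike.inner_apply, conj_trivial, Fin.sum_univ_seven]
  ring

lemma neg_cross_nu {r : ℝ} (hr : r ^ 2 < 1) {x : E7} (hx6 : x 6 = r) :
    -cross x (nu r x) = xi r x := by
  have hinv :
      Real.sqrt (1 - r ^ 2) + r * (r / Real.sqrt (1 - r ^ 2)) = 1 / Real.sqrt (1 - r ^ 2) := by
    have hs0 : 0 < Real.sqrt (1 - r ^ 2) := Real.sqrt_pos.mpr (by linarith)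
    field_simp
    rw [Real.sq_sqrt (by linarith)]
    ring
  ext i
  fin_cases i <;>
  · simp only [cross, nu, xi, hx6, PiLp.neg_apply, WithLp.ofLp_toLp, Fin.reduceFinMk, Fin.isValue,
      Fin.reduceEq, reduceIte]
    rw [← hinv]
    ring

lemma norm_xi {r : ℝ} (hr : r ^ 2 < 1) {x : E7}
    (hsum : ∑ i : Fin 6, x i.castSucc ^ 2 = 1 - r ^ 2) : ‖xi r x‖ = 1 := by
  simp only [Fin.sum_univ_six, Fin.reduceCastSucc, Fin.castSucc_zero] at hsum
  have hs0 : Real.sqrt (1 - r ^ 2) ≠ 0 := (Real.sqrt_pos.mpr (by linarith)).ne'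
  have hs : Real.sqrt (1 - r ^ 2) ^ 2 = 1 - r ^ 2 := Real.sq_sqrt (by linarith)
  refine (pow_left_inj₀ (norm_nonneg _) zero_le_one two_ne_zero).mp ?_
  rw [one_pow, ← real_inner_self_eq_norm_sq, inner_eq_sum_seven]
  simp only [xi, WithLp.ofLp_toLp, Fin.isValue, Fin.reduceEq, reduceIte]
  field_simp
  linear_combination hsum - hs

lemma inner_xi_nu (r : ℝ) (x : E7) : ⟪xi r x, nu r x⟫ = 0 := by
  rw [inner_eq_sum_seven]
  simp only [xi, nu, WithLp.ofLp_toLp, Fin.isValue, Fin.reduceEq, reduceIte]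
  ring

lemma tangentMr_xi (r : ℝ) (x : E7) : TangentMr x (xi r x) := by
  refine ⟨by simp [xi], ?_⟩
  rw [inner_eq_sum_seven]
  simp only [xi, WithLp.ofLp_toLp, Fin.isValue, Fin.reduceEq, reduceIte]
  ring

/-- on M_r, the vector field ξ = -N × ν equals
(1/√(1-r²))(x₆e₁ + x₅e₂ + x₄e₃ - x₃e₄ - x₂e₅ - x₁e₆), and ξ is a unit
vector field tangent to M_r (v₇ = 0 and ⟨ξ,x⟩ = 0) orthogonal to ν. -/
theorem stmt7 (r : ℝ) (hr : -1 < r ∧ r < 1) (x : E7) (hx : x ∈ Mr r) :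
    -cross x (nu r x) = xi r x ∧ ‖xi r x‖ = 1 ∧
    ⟪xi r x, nu r x⟫ = 0 ∧ TangentMr x (xi r x) := by
  obtain ⟨hx6, hsum⟩ := hx
  have hr2 : r ^ 2 < 1 := (sq_lt_one_iff_abs_lt_one r).mpr (abs_lt.mpr hr)
  exact ⟨neg_cross_nu hr2 hx6, norm_xi hr2 hsum, inner_xi_nu r x, tangentMr_xi r x⟩
end
end

section
/- The 1-form η = (1/√(1-r²))(x₆dx₁ + x₅dx₂ + x₄dx₃ - x₃dx₄ - x₂dx₅ - x₁dx₆) on M_r satisfies dη = -(2/√(1-r²))(dx₁∧dx₆ + dx₂∧dx₅ + dx₃∧dx₄), and η ∧ (dη)² is nowhere zero on M_r; hence η is a contact form on M_r. -/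
/- Common setup: ℝ⁷ ≅ pure imaginary octonions 𝔆₊ (0-based indices: eᵢ ↦ i-1),
   octonion cross product x × y = xy + ⟨x,y⟩·1 given by the Fano triples
   (e₁e₂=e₃, e₁e₄=e₅, e₁e₆=e₇, e₂e₅=e₇, e₃e₄=e₇, e₃e₅=e₆, e₂e₆=e₄),
   the hypersurfaces M_r = S⁶ ∩ {x₇ = r}, the unit normal ν of M_r in S⁶,
   the vector field ξ = -N × ν, its dual 1-form η and dη
   (with the convention dη(X,Y) = ½(Xη(Y) - Yη(X) - η([X,Y]))). -/

noncomputable section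

open scoped RealInnerProductSpace

/-! The 1-form η is linear in the base point, so its exterior derivative is constant and is read
off from the coefficients. On M_r the Reeb field ξ satisfies η(ξ) = |x|²/(1 - r²) = 1. For
nondegeneracy, the complex structure J of ℝ⁶ pairing the coordinates (1,6), (2,5), (3,4)
exchanges the conditions ⟨v, x⟩ = 0 and η(v) = 0, hence preserves ker η ∩ T_xM_r, and
dη(v, Jv) = -|v|²/√(1 - r²). -/

lemma real_inner_E7 (v x : E7) : ⟪v, x⟫ = v 0 * x 0 + v 1 * x 1 + v 2 * x 2
    + v 3 * x 3 + v 4 * x 4 + v 5 * x 5 + v 6 * x 6 := by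
  simp only [PiLp.inner_apply, RCLike.inner_apply, conj_trivial, Fin.sum_univ_seven]
  ring

lemma fderiv_eta_left (r : ℝ) (x u v : E7) :
    fderiv ℝ (fun z => eta r z v) x u = eta r u v := by
  let L : E7 →ₗ[ℝ] ℝ :=
    { toFun := fun z => eta r z v
      map_add' := fun _ _ => by simp only [eta, PiLp.add_apply]; ring
      map_smul' := fun _ _ => by
        simp only [eta, PiLp.smul_apply, smul_eq_mul, RingHom.id_apply]; ring }
  exact congrArg (· u) (LinearMap.toContinuousLinearMap L).fderiv

lemma half_alt_fderiv_eta (r : ℝ) (x u v : E7) :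
    (1 / 2) * (fderiv ℝ (fun z => eta r z v) x u - fderiv ℝ (fun z => eta r z u) x v)
      = deta r u v := by
  rw [fderiv_eta_left, fderiv_eta_left]
  simp only [eta, deta]
  ring

lemma eta_xi (r : ℝ) (x : E7) :
    eta r x (xi r x) = (1 / Real.sqrt (1 - r ^ 2)) ^ 2 * ∑ i : Fin 6, x i.castSucc ^ 2 := by
  simp only [eta, xi, Fin.reduceEq, ↓reduceIte, Fin.sum_univ_six, Fin.castSucc_zero,
    Fin.castSucc_one, Fin.reduceCastSucc]
  ring

lemma eta_xi_eq_one {r : ℝ} (hr : 0 < 1 - r ^ 2) {x : E7} (hx : x ∈ Mr r) :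
    eta r x (xi r x) = 1 := by
  rw [eta_xi, hx.2, div_pow, Real.sq_sqrt hr.le, one_pow, one_div_mul_cancel hr.ne']

def jOp (v : E7) : E7 := WithLp.toLp 2 ![-v 5, -v 4, -v 3, v 2, v 1, v 0, 0]

lemma eta_eq_inner_jOp (r : ℝ) (x v : E7) :
    eta r x v = 1 / Real.sqrt (1 - r ^ 2) * ⟪jOp v, x⟫ := by
  rw [real_inner_E7]
  simp only [eta, jOp, PiLp.toLp_apply, Matrix.cons_val]
  ring

lemma eta_jOp (r : ℝ) (x : E7) {v : E7} (hv : v 6 = 0) :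
    eta r x (jOp v) = -(1 / Real.sqrt (1 - r ^ 2)) * ⟪v, x⟫ := by
  rw [real_inner_E7, hv]
  simp only [eta, jOp, PiLp.toLp_apply, Matrix.cons_val]
  ring

lemma deta_jOp (r : ℝ) {v : E7} (hv : v 6 = 0) :
    deta r v (jOp v) = -(1 / Real.sqrt (1 - r ^ 2)) * ⟪v, v⟫ := by
  rw [real_inner_E7, hv]
  simp only [deta, jOp, PiLp.toLp_apply, Matrix.cons_val]
  ring

lemma tangentMr_jOp {r : ℝ} (hr : 0 < 1 - r ^ 2) {x v : E7} (hv : TangentMr x v)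
    (hηv : eta r x v = 0) : TangentMr x (jOp v) ∧ eta r x (jOp v) = 0 := by
  have hc : 1 / Real.sqrt (1 - r ^ 2) ≠ 0 := one_div_ne_zero (Real.sqrt_pos.2 hr).ne'
  refine ⟨⟨rfl, ?_⟩, by rw [eta_jOp r x hv.1, hv.2, mul_zero]⟩
  rw [eta_eq_inner_jOp] at hηv
  exact (mul_eq_zero.1 hηv).resolve_left hc

lemma eq_zero_of_deta_eq_zero_on_ker_eta {r : ℝ} (hr : 0 < 1 - r ^ 2) {x v : E7}
    (hv : TangentMr x v) (hηv : eta r x v = 0)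
    (hdη : ∀ w : E7, TangentMr x w → eta r x w = 0 → deta r v w = 0) : v = 0 := by
  obtain ⟨hJv, hηJv⟩ := tangentMr_jOp hr hv hηv
  have hvv := hdη (jOp v) hJv hηJv
  rw [deta_jOp r hv.1, neg_mul, neg_eq_zero] at hvv
  exact inner_self_eq_zero.1
    ((mul_eq_zero.1 hvv).resolve_left (one_div_ne_zero (Real.sqrt_pos.2 hr).ne'))

/-- the 1-form η satisfies
dη = -(2/√(1-r²))(dx₁∧dx₆ + dx₂∧dx₅ + dx₃∧dx₄) (with the convention
dη(X,Y) = ½(Xη(Y) - Yη(X) - η([X,Y])), so dη is the bilinear form `deta`),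
and η ∧ (dη)² is nowhere zero on M_r, i.e. at every point of M_r, η is
nonzero on the tangent space and dη is nondegenerate on ker η ∩ T_xM_r;
hence η is a contact form on M_r. -/
theorem stmt8 (r : ℝ) (hr : -1 < r ∧ r < 1) :
    (∀ x u v : E7,
      (1 / 2) * (fderiv ℝ (fun z => eta r z v) x u - fderiv ℝ (fun z => eta r z u) x v)
        = deta r u v) ∧
    ∀ x ∈ Mr r,
      (∃ v : E7, TangentMr x v ∧ eta r x v ≠ 0) ∧
      ∀ v : E7, TangentMr x v → eta r x v = 0 →
        (∀ w : E7, TangentMr x w → eta r x w = 0 → deta r v w = 0) → v = 0 := by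
  have hr' : 0 < 1 - r ^ 2 := by nlinarith [hr.1, hr.2]
  refine ⟨half_alt_fderiv_eta r, fun x hx => ⟨?_, fun v hv hηv hdη => ?_⟩⟩
  · exact ⟨xi r x, tangentMr_xi r x, by rw [eta_xi_eq_one hr' hx]; exact one_ne_zero⟩
  · exact eq_zero_of_deta_eq_zero_on_ker_eta hr' hv hηv hdη
end
end

section
/- For the naturally induced almost contact metric structure (φ, ξ, η, g) on M_r with φX = JX - η(X)ν, at any point with x₁ ≠ 0 one has g(X₁,₂, φX₁,₃) = -x₁(x₁² + x₂² + x₃²) ≠ 0 while dη(X₁,₂, X₁,₃) = 0, where X₁,₂ = -x₂∂₁ + x₁∂₂ and X₁,₃ = -x₃∂₁ + x₁∂₃; hence (M_r, φ, ξ, η, g) is not a contact metric manifold for any r ∈ (-1,1). -/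
/- Common setup: ℝ⁷ ≅ pure imaginary octonions 𝔆₊ (0-based indices: eᵢ ↦ i-1),
   octonion cross product x × y = xy + ⟨x,y⟩·1 given by the Fano triples
   (e₁e₂=e₃, e₁e₄=e₅, e₁e₆=e₇, e₂e₅=e₇, e₃e₄=e₇, e₃e₅=e₆, e₂e₆=e₄),
   the hypersurfaces M_r = S⁶ ∩ {x₇ = r}, the unit normal ν of M_r in S⁶,
   the vector field ξ = -N × ν, its dual 1-form η and dη
   (with the convention dη(X,Y) = ½(Xη(Y) - Yη(X) - η([X,Y]))). -/

noncomputable section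

open scoped RealInnerProductSpace

/-- The naturally induced almost contact structure tensor:
φX = JX - η(X)ν, where J_x v = x × v (for v tangent to S⁶). -/
def phi (r : ℝ) (x v : E7) : E7 := cross x v - eta r x v • nu r x

def X12 (x : E7) : E7 := WithLp.toLp 2 fun i => if i = 0 then -x 1 else if i = 1 then x 0 else 0
def X13 (x : E7) : E7 := WithLp.toLp 2 fun i => if i = 0 then -x 2 else if i = 2 then x 0 else 0

/-
X₁,₂ and X₁,₃ are infinitesimal rotations in the coordinate planes (1,2) and (1,3), so they are
tangent to every M_r. They only move the coordinates x₁, x₂, x₃, none of which is paired with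
another of them by dη = -(2/√(1-r²))(dx₁∧dx₆ + dx₂∧dx₅ + dx₃∧dx₄); hence dη(X₁,₂, X₁,₃) = 0.
On the other hand X₁,₂ ⟂ ν, so g(X₁,₂, φX₁,₃) = ⟨X₁,₂, x × X₁,₃⟩, a cubic in x₁, x₂, x₃ which is
-x₁(x₁² + x₂² + x₃²). The point √(1-r²)e₁ + re₇ lies on M_r and has x₁ ≠ 0.
-/

lemma inner_X12_phi_X13 (r : ℝ) (x : E7) :
    ⟪X12 x, phi r x (X13 x)⟫ = -(x 0) * ((x 0) ^ 2 + (x 1) ^ 2 + (x 2) ^ 2) := by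
  simp only [PiLp.inner_apply, RCLike.inner_apply, starRingEnd_apply, star_trivial,
    Fin.sum_univ_seven, phi, cross, eta, nu, X12, X13, PiLp.sub_apply, PiLp.smul_apply,
    smul_eq_mul, WithLp.ofLp_toLp, Fin.reduceEq, reduceIte]
  ring

lemma deta_X12_X13 (r : ℝ) (x : E7) : deta r (X12 x) (X13 x) = 0 := by
  simp only [deta, X12, X13, Fin.reduceEq, reduceIte, WithLp.ofLp_toLp]
  ring

lemma tangentMr_X12 (x : E7) : TangentMr x (X12 x) := by
  refine ⟨by simp [X12], ?_⟩
  simp only [PiLp.inner_apply, RCLike.inner_apply, starRingEnd_apply, star_trivial,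
    Fin.sum_univ_seven, X12, Fin.reduceEq, reduceIte]
  ring

lemma tangentMr_X13 (x : E7) : TangentMr x (X13 x) := by
  refine ⟨by simp [X13], ?_⟩
  simp only [PiLp.inner_apply, RCLike.inner_apply, starRingEnd_apply, star_trivial,
    Fin.sum_univ_seven, X13, Fin.reduceEq, reduceIte]
  ring

lemma neg_mul_sum_sq_ne_zero {a : ℝ} (ha : a ≠ 0) (b c : ℝ) :
    -a * (a ^ 2 + b ^ 2 + c ^ 2) ≠ 0 :=
  mul_ne_zero (neg_ne_zero.2 ha) (by positivity)

lemma deta_X12_X13_ne_inner (r : ℝ) {x : E7} (hx : x 0 ≠ 0) :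
    deta r (X12 x) (X13 x) ≠ ⟪X12 x, phi r x (X13 x)⟫ := by
  rw [deta_X12_X13, inner_X12_phi_X13]
  exact (neg_mul_sum_sq_ne_zero hx _ _).symm

lemma exists_mem_Mr_coord_zero_ne_zero {r : ℝ} (hr₁ : -1 < r) (hr₂ : r < 1) :
    ∃ y ∈ Mr r, y 0 ≠ 0 := by
  have hpos : 0 < 1 - r ^ 2 := by nlinarith
  refine ⟨WithLp.toLp 2 fun i => if i = 0 then √(1 - r ^ 2) else if i = 6 then r else 0,
    ⟨by simp, ?_⟩, by simpa using (Real.sqrt_pos.2 hpos).ne'⟩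
  simp [Fin.sum_univ_six, Real.sq_sqrt hpos.le]

theorem stmt12_general (r : ℝ) (x : E7)
    (h1 : x 0 ≠ 0) :
    ⟪X12 x, phi r x (X13 x)⟫ = -(x 0) * ((x 0) ^ 2 + (x 1) ^ 2 + (x 2) ^ 2) ∧
    -(x 0) * ((x 0) ^ 2 + (x 1) ^ 2 + (x 2) ^ 2) ≠ 0 ∧
    deta r (X12 x) (X13 x) = 0 ∧
    deta r (X12 x) (X13 x) ≠ ⟪X12 x, phi r x (X13 x)⟫ ∧
    ∀ r' : ℝ, -1 < r' → r' < 1 → ∃ y ∈ Mr r', ∃ u v : E7,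
      TangentMr y u ∧ TangentMr y v ∧ deta r' u v ≠ ⟪u, phi r' y v⟫ := by
  refine ⟨inner_X12_phi_X13 r x, neg_mul_sum_sq_ne_zero h1 _ _, deta_X12_X13 r x,
    deta_X12_X13_ne_inner r h1, fun r' hr₁ hr₂ => ?_⟩
  obtain ⟨y, hy, hy0⟩ := exists_mem_Mr_coord_zero_ne_zero hr₁ hr₂
  exact ⟨y, hy, X12 y, X13 y, tangentMr_X12 y, tangentMr_X13 y, deta_X12_X13_ne_inner r' hy0⟩

/-- for the naturally induced almost contact metric structure
(φ, ξ, η, g) on M_r, at any point with x₁ ≠ 0 one has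
g(X₁,₂, φX₁,₃) = -x₁(x₁² + x₂² + x₃²) ≠ 0 while dη(X₁,₂, X₁,₃) = 0; hence
(M_r, φ, ξ, η, g) is not a contact metric manifold for any r ∈ (-1,1). -/
theorem stmt12 (r : ℝ) (hr : -1 < r ∧ r < 1) (x : E7) (hx : x ∈ Mr r)
    (h1 : x 0 ≠ 0) :
    ⟪X12 x, phi r x (X13 x)⟫ = -(x 0) * ((x 0) ^ 2 + (x 1) ^ 2 + (x 2) ^ 2) ∧
    -(x 0) * ((x 0) ^ 2 + (x 1) ^ 2 + (x 2) ^ 2) ≠ 0 ∧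
    deta r (X12 x) (X13 x) = 0 ∧
    deta r (X12 x) (X13 x) ≠ ⟪X12 x, phi r x (X13 x)⟫ ∧
    ∀ r' : ℝ, -1 < r' → r' < 1 → ∃ y ∈ Mr r', ∃ u v : E7,
      TangentMr y u ∧ TangentMr y v ∧ deta r' u v ≠ ⟪u, phi r' y v⟫ :=
  stmt12_general r x h1
end
end

section
/- The contact metric manifold (M₀, φ', ξ, η, g) has constant sectional curvature 1 and is therefore a Sasakian manifold. -/
/- Common setup: ℝ⁷ ≅ pure imaginary octonions 𝔆₊ (0-based indices: eᵢ ↦ i-1),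
   octonion cross product x × y = xy + ⟨x,y⟩·1 given by the Fano triples
   (e₁e₂=e₃, e₁e₄=e₅, e₁e₆=e₇, e₂e₅=e₇, e₃e₄=e₇, e₃e₅=e₆, e₂e₆=e₄),
   the hypersurfaces M_r = S⁶ ∩ {x₇ = r}, the unit normal ν of M_r in S⁶,
   the vector field ξ = -N × ν, its dual 1-form η and dη
   (with the convention dη(X,Y) = ½(Xη(Y) - Yη(X) - η([X,Y]))). -/

noncomputable section

open scoped RealInnerProductSpace

/-- Orthogonal projection onto T_xM_r (x ∈ M_r), killing the two unit normals
N_x = x and ν_x of M_r in ℝ⁷. -/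
def projMr (r : ℝ) (x v : E7) : E7 := v - ⟪v, x⟫ • x - ⟪v, nu r x⟫ • nu r x

/-- The Levi-Civita connection of the induced metric on M_r:
∇_V W = P(D_V W), the tangential projection of the flat derivative. -/
def nabla (r : ℝ) (V W : E7 → E7) : E7 → E7 := fun x => projMr r x (fderiv ℝ W x (V x))

/-- Lie bracket of vector fields: [X,Y] = D_X Y - D_Y X. -/
def bracket (X Y : E7 → E7) : E7 → E7 := fun x => fderiv ℝ Y x (X x) - fderiv ℝ X x (Y x)

/-- Riemann curvature R(X,Y)Z = ∇_X∇_Y Z - ∇_Y∇_X Z - ∇_{[X,Y]} Z of (M_r, g). -/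
def curv (r : ℝ) (X Y Z : E7 → E7) : E7 → E7 := fun x =>
  nabla r X (nabla r Y Z) x - nabla r Y (nabla r X Z) x - nabla r (bracket X Y) Z x


/-! ### Auxiliary lemmas -/

/-- The constant vector `-e₇`, which equals `ν` on `M₀`. -/
def cv : E7 := WithLp.toLp 2 fun i => if i = 6 then -1 else 0

lemma inner_E7 (u v : E7) : ⟪u, v⟫ = ∑ i, u i * v i := by
  simp [PiLp.inner_apply, RCLike.inner_apply, conj_trivial, mul_comm]

lemma nu_zero (x : E7) : nu 0 x = cv := by
  ext i
  simp [nu, cv]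

lemma inner_cv (v : E7) : ⟪v, cv⟫ = -v 6 := by
  simp [inner_E7, cv, Fin.sum_univ_seven]

lemma inner_cv' (v : E7) : ⟪cv, v⟫ = -v 6 := by
  rw [real_inner_comm]; exact inner_cv v

lemma mem_Mr0 {x : E7} : x ∈ Mr 0 ↔ x 6 = 0 ∧ ⟪x, x⟫ = 1 := by
  have h7 : ⟪x, x⟫ = (∑ i : Fin 6, x i.castSucc ^ 2) + x 6 * x 6 := by
    rw [inner_E7, Fin.sum_univ_castSucc]
    have h : ∀ i : Fin 6, x i.castSucc * x i.castSucc = x i.castSucc ^ 2 := fun i => (sq _).symm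
    rw [Finset.sum_congr rfl fun i _ => h i]
    rfl
  constructor
  · rintro ⟨h1, h2⟩
    refine ⟨h1, ?_⟩
    rw [h7, h1, h2]; ring
  · rintro ⟨h1, h2⟩
    refine ⟨h1, ?_⟩
    rw [h7, h1] at h2; linarith

lemma projMr_eq (x v : E7) : projMr 0 x v = v - ⟪v, x⟫ • x - ⟪v, cv⟫ • cv := by
  rw [projMr, nu_zero]

lemma projMr_sub (x u v : E7) : projMr 0 x (u - v) = projMr 0 x u - projMr 0 x v := by
  simp only [projMr_eq, inner_sub_left, sub_smul]; abel

lemma projMr_add (x u v : E7) : projMr 0 x (u + v) = projMr 0 x u + projMr 0 x v := by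
  simp only [projMr_eq, inner_add_left, add_smul]; abel

lemma projMr_smul (x : E7) (c : ℝ) (v : E7) : projMr 0 x (c • v) = c • projMr 0 x v := by
  simp only [projMr_eq, real_inner_smul_left, smul_sub, smul_smul]

lemma projMr_x {x : E7} (hx : x ∈ Mr 0) : projMr 0 x x = 0 := by
  obtain ⟨h1, h2⟩ := mem_Mr0.1 hx
  rw [projMr_eq, h2, inner_cv, h1]; simp

lemma projMr_cv {x : E7} (hx : x ∈ Mr 0) : projMr 0 x cv = 0 := by
  obtain ⟨h1, _⟩ := mem_Mr0.1 hx
  rw [projMr_eq, inner_cv', h1, inner_cv]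
  have h : cv 6 = -1 := rfl
  rw [h]; simp

lemma projMr_tangent {x v : E7} (hv6 : v 6 = 0) (hvx : ⟪v, x⟫ = 0) :
    projMr 0 x v = v := by
  rw [projMr_eq, hvx, inner_cv, hv6]; simp

/-- A differentiable function vanishing on `M₀` has vanishing derivative in
tangent directions. -/
lemma fderiv_zero_on_Mr {f : E7 → ℝ} (hf : Differentiable ℝ f)
    (h0 : ∀ z ∈ Mr 0, f z = 0) {x u : E7} (hx : x ∈ Mr 0)
    (hu6 : u 6 = 0) (hux : ⟪u, x⟫ = 0) : fderiv ℝ f x u = 0 := by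
  obtain ⟨hx6, hxx⟩ := mem_Mr0.1 hx
  set a : ℝ := ⟪u, u⟫ with ha
  have ha0 : 0 ≤ a := real_inner_self_nonneg
  set γ : ℝ → E7 := fun t => (Real.sqrt (1 + a * t ^ 2))⁻¹ • (x + t • u) with hγ
  have hpos : ∀ t : ℝ, (0:ℝ) < 1 + a * t ^ 2 := by
    intro t; nlinarith [sq_nonneg t, mul_nonneg ha0 (sq_nonneg t)]
  have hsq : ∀ t : ℝ, Real.sqrt (1 + a * t ^ 2) ^ 2 = 1 + a * t ^ 2 :=
    fun t => Real.sq_sqrt (hpos t).le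
  have hs0 : ∀ t : ℝ, Real.sqrt (1 + a * t ^ 2) ≠ 0 :=
    fun t => (Real.sqrt_pos.2 (hpos t)).ne'
  have hxu : ⟪x, u⟫ = 0 := by rw [real_inner_comm]; exact hux
  have hmem : ∀ t, γ t ∈ Mr 0 := by
    intro t
    rw [mem_Mr0]
    constructor
    · show (Real.sqrt (1 + a * t ^ 2))⁻¹ * (x + t • u) 6 = 0
      have h : (x + t • u) 6 = x 6 + t * u 6 := rfl
      rw [h, hx6, hu6]; ring
    · have e1 : ⟪x + t • u, x + t • u⟫ = 1 + a * t ^ 2 := by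
        rw [real_inner_add_add_self, hxx, real_inner_smul_right, hxu,
          real_inner_smul_left, real_inner_smul_right, ← ha]
        ring
      show ⟪(Real.sqrt (1 + a * t ^ 2))⁻¹ • (x + t • u),
            (Real.sqrt (1 + a * t ^ 2))⁻¹ • (x + t • u)⟫ = 1
      rw [real_inner_smul_left, real_inner_smul_right, e1, ← hsq t]
      field_simp
      rw [Real.sqrt_sq (Real.sqrt_nonneg _)]
  have hγ0 : γ 0 = x := by simp [hγ]
  have hq : HasDerivAt (fun t : ℝ => 1 + a * t ^ 2) 0 0 := by
    simpa using ((hasDerivAt_pow 2 (0:ℝ)).const_mul a).const_add 1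
  have hs : HasDerivAt (fun t : ℝ => Real.sqrt (1 + a * t ^ 2)) 0 0 := by
    have h1 : HasDerivAt Real.sqrt (1 / (2 * Real.sqrt (1 + a * 0 ^ 2))) (1 + a * 0 ^ 2) :=
      Real.hasDerivAt_sqrt (by positivity)
    simpa [Function.comp_def] using h1.comp 0 hq
  have hsinv : HasDerivAt (fun t : ℝ => (Real.sqrt (1 + a * t ^ 2))⁻¹) 0 0 := by
    have h2 := hs.inv (hs0 0)
    simpa [Pi.inv_def] using h2
  have hlin : HasDerivAt (fun t : ℝ => x + t • u) u 0 := by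
    simpa using ((hasDerivAt_id (0:ℝ)).smul_const u).const_add x
  have hγd : HasDerivAt γ u 0 := by
    have h2 := hsinv.smul hlin
    simpa [hγ, Pi.smul_def'] using h2
  have hcomp : HasDerivAt (fun t => f (γ t)) (fderiv ℝ f x u) 0 := by
    have h1 : HasFDerivAt f (fderiv ℝ f x) (γ 0) := by
      rw [hγ0]; exact (hf x).hasFDerivAt
    exact h1.comp_hasDerivAt 0 hγd
  have hzero : (fun t => f (γ t)) = fun _ => (0:ℝ) := funext fun t => h0 _ (hmem t)
  have hconst : HasDerivAt (fun t => f (γ t)) 0 0 := by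
    rw [hzero]; exact hasDerivAt_const 0 0
  exact hcomp.unique hconst

/-- For a tangent vector field `W` on `M₀`, `⟪D_u W, x⟫ = -⟪W x, u⟫` for tangent `u`. -/
lemma inner_fderiv_tangent {W : E7 → E7} (hW : Differentiable ℝ W)
    (hWt : ∀ z ∈ Mr 0, TangentMr z (W z)) {x u : E7} (hx : x ∈ Mr 0)
    (hu6 : u 6 = 0) (hux : ⟪u, x⟫ = 0) :
    ⟪fderiv ℝ W x u, x⟫ = -⟪W x, u⟫ := by
  have h := fderiv_zero_on_Mr (f := fun y => ⟪W y, y⟫)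
      (hW.inner ℝ differentiable_id) (fun z hz => (hWt z hz).2) hx hu6 hux
  have hgd : HasFDerivAt (fun y => ⟪W y, y⟫)
      ((fderivInnerCLM ℝ (W x, x)).comp ((fderiv ℝ W x).prod (ContinuousLinearMap.id ℝ E7))) x :=
    (hW x).hasFDerivAt.inner ℝ (hasFDerivAt_id x)
  rw [hgd.fderiv] at h
  simp only [ContinuousLinearMap.comp_apply, ContinuousLinearMap.prod_apply,
    ContinuousLinearMap.id_apply, fderivInnerCLM_apply] at h
  linarith

lemma fderiv_nabla_apply (Y W : E7 → E7) (hY : ContDiff ℝ (⊤ : ℕ∞) Y) (hW : ContDiff ℝ (⊤ : ℕ∞) W)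
    (x u : E7) :
    fderiv ℝ (nabla 0 Y W) x u =
      fderiv ℝ (fun y => fderiv ℝ W y (Y y)) x u
        - (⟪fderiv ℝ W x (Y x), u⟫ + ⟪fderiv ℝ (fun y => fderiv ℝ W y (Y y)) x u, x⟫) • x
        - ⟪fderiv ℝ W x (Y x), x⟫ • u
        - ⟪fderiv ℝ (fun y => fderiv ℝ W y (Y y)) x u, cv⟫ • cv := by
  set A : E7 → E7 := fun y => fderiv ℝ W y (Y y) with hA
  have hAc : ContDiff ℝ (⊤ : ℕ∞) A := (hW.fderiv_right (by simp)).clm_apply hY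
  have hAd : HasFDerivAt A (fderiv ℝ A x) x := (hAc.differentiable (by simp) x).hasFDerivAt
  have h1 := hAd.inner ℝ (hasFDerivAt_id x)
  have h2 := hAd.inner ℝ (hasFDerivAt_const cv x)
  have h3 := h1.smul (hasFDerivAt_id x)
  have h4 := h2.smul (hasFDerivAt_const cv x)
  have h5 := (hAd.sub h3).sub h4
  have h6 : nabla 0 Y W = fun y => A y - ⟪A y, y⟫ • y - ⟪A y, cv⟫ • cv := by
    funext y
    show projMr 0 y (fderiv ℝ W y (Y y)) = _
    exact projMr_eq y (A y)
  rw [h6]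
  have h7 : fderiv ℝ (fun y => A y - ⟪A y, y⟫ • y - ⟪A y, cv⟫ • cv) x =
      (fderiv ℝ A x -
        (⟪A x, x⟫ • ContinuousLinearMap.id ℝ E7 +
          ((fderivInnerCLM ℝ (A x, x)).comp
            ((fderiv ℝ A x).prod (ContinuousLinearMap.id ℝ E7))).smulRight x)) -
        (⟪A x, cv⟫ • (0 : E7 →L[ℝ] E7) +
          ((fderivInnerCLM ℝ (A x, cv)).comp
            ((fderiv ℝ A x).prod (0 : E7 →L[ℝ] E7))).smulRight cv) :=
    HasFDerivAt.fderiv h5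
  rw [h7]
  simp only [ContinuousLinearMap.sub_apply, ContinuousLinearMap.add_apply,
    ContinuousLinearMap.smul_apply, ContinuousLinearMap.smulRight_apply,
    ContinuousLinearMap.comp_apply, ContinuousLinearMap.prod_apply,
    ContinuousLinearMap.id_apply, ContinuousLinearMap.zero_apply,
    fderivInnerCLM_apply, inner_zero_right, smul_zero, zero_add]
  rw [real_inner_comm x (A x)]
  abel

lemma nabla_nabla (X Y W : E7 → E7) (hY : ContDiff ℝ (⊤ : ℕ∞) Y) (hW : ContDiff ℝ (⊤ : ℕ∞) W)
    (hYt : ∀ z ∈ Mr 0, TangentMr z (Y z)) (hWt : ∀ z ∈ Mr 0, TangentMr z (W z))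
    {x : E7} (hx : x ∈ Mr 0) (hX6 : X x 6 = 0) (hXx : ⟪X x, x⟫ = 0) :
    nabla 0 X (nabla 0 Y W) x =
      projMr 0 x (fderiv ℝ (fun y => fderiv ℝ W y (Y y)) x (X x)) + ⟪W x, Y x⟫ • X x := by
  have key : ⟪fderiv ℝ W x (Y x), x⟫ = -⟪W x, Y x⟫ :=
    inner_fderiv_tangent (hW.differentiable (by simp)) hWt hx (hYt x hx).1 (hYt x hx).2
  have h0 : nabla 0 X (nabla 0 Y W) x = projMr 0 x (fderiv ℝ (nabla 0 Y W) x (X x)) := rfl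
  rw [h0, fderiv_nabla_apply Y W hY hW x (X x), projMr_sub, projMr_sub, projMr_sub,
    projMr_smul, projMr_smul, projMr_smul, projMr_x hx, projMr_cv hx,
    projMr_tangent hX6 hXx, key]
  simp only [smul_zero, neg_smul]
  abel

lemma second_term_cancel (X Y W : E7 → E7) (hX : ContDiff ℝ (⊤ : ℕ∞) X) (hY : ContDiff ℝ (⊤ : ℕ∞) Y)
    (hW : ContDiff ℝ (⊤ : ℕ∞) W) (x : E7) :
    fderiv ℝ (fun y => fderiv ℝ W y (Y y)) x (X x)
      - fderiv ℝ (fun y => fderiv ℝ W y (X y)) x (Y x)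
      - fderiv ℝ W x (bracket X Y x) = 0 := by
  have hW' : Differentiable ℝ (fderiv ℝ W) := (hW.fderiv_right (m := 1) (by exact WithTop.coe_le_coe.2 le_top)).differentiable one_ne_zero
  have e1 : fderiv ℝ (fun y => fderiv ℝ W y (Y y)) x =
      (fderiv ℝ W x).comp (fderiv ℝ Y x) + (fderiv ℝ (fderiv ℝ W) x).flip (Y x) :=
    fderiv_clm_apply (hW' x) (hY.differentiable (by simp) x)
  have e2 : fderiv ℝ (fun y => fderiv ℝ W y (X y)) x =
      (fderiv ℝ W x).comp (fderiv ℝ X x) + (fderiv ℝ (fderiv ℝ W) x).flip (X x) :=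
    fderiv_clm_apply (hW' x) (hX.differentiable (by simp) x)
  have hsym := second_derivative_symmetric (f := W) (f' := fderiv ℝ W)
      (fun y => ((hW.differentiable (by simp)) y).hasFDerivAt) ((hW' x).hasFDerivAt) (X x) (Y x)
  rw [e1, e2]
  simp only [ContinuousLinearMap.add_apply, ContinuousLinearMap.coe_comp', Function.comp_apply,
    ContinuousLinearMap.flip_apply, bracket, map_sub]
  rw [hsym]
  abel

/-- `M₀` has constant sectional curvature `1`. -/
lemma curv_const_one (X Y W : E7 → E7)
    (hX : ContDiff ℝ (⊤ : ℕ∞) X) (hY : ContDiff ℝ (⊤ : ℕ∞) Y) (hW : ContDiff ℝ (⊤ : ℕ∞) W)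
    (hXt : ∀ z ∈ Mr 0, TangentMr z (X z)) (hYt : ∀ z ∈ Mr 0, TangentMr z (Y z))
    (hWt : ∀ z ∈ Mr 0, TangentMr z (W z)) {x : E7} (hx : x ∈ Mr 0) :
    curv 0 X Y W x = ⟪Y x, W x⟫ • X x - ⟪X x, W x⟫ • Y x := by
  have e1 := nabla_nabla X Y W hY hW hYt hWt hx (hXt x hx).1 (hXt x hx).2
  have e2 := nabla_nabla Y X W hX hW hXt hWt hx (hYt x hx).1 (hYt x hx).2
  have e3 : nabla 0 (bracket X Y) W x = projMr 0 x (fderiv ℝ W x (bracket X Y x)) := rfl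
  have e4 := second_term_cancel X Y W hX hY hW x
  have e5 : fderiv ℝ (fun y => fderiv ℝ W y (Y y)) x (X x) =
      fderiv ℝ (fun y => fderiv ℝ W y (X y)) x (Y x) + fderiv ℝ W x (bracket X Y x) :=
    sub_eq_zero.1 (by rwa [sub_sub] at e4)
  have hcurv : curv 0 X Y W x =
      nabla 0 X (nabla 0 Y W) x - nabla 0 Y (nabla 0 X W) x - nabla 0 (bracket X Y) W x := rfl
  rw [hcurv, e1, e2, e3, e5, projMr_add,
    real_inner_comm (W x) (Y x), real_inner_comm (W x) (X x)]
  abel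

lemma xi_zero_smooth : ContDiff ℝ (⊤ : ℕ∞) (xi 0) := by
  refine contDiff_euclidean.2 fun i => ?_
  have hp : ∀ j : Fin 7, ContDiff ℝ (⊤ : ℕ∞) fun x : E7 => x j :=
    fun j => (EuclideanSpace.proj (𝕜 := ℝ) (ι := Fin 7) j).contDiff
  fin_cases i <;>
    · simp only [xi, PiLp.toLp_apply]
      norm_num
      first
        | exact contDiff_const.mul (hp _)
        | exact contDiff_const.mul (hp _).neg
        | exact (hp _)
        | exact (hp _).neg
        | exact contDiff_const

lemma xi_zero_tangent : ∀ z ∈ Mr 0, TangentMr z (xi 0 z) := by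
  intro z _
  constructor
  · show (xi 0 z).ofLp 6 = 0
    simp only [xi, PiLp.toLp_apply]
    norm_num [show ¬((6:Fin 7) = 0) from by decide, show ¬((6:Fin 7) = 1) from by decide,
      show ¬((6:Fin 7) = 2) from by decide, show ¬((6:Fin 7) = 3) from by decide,
      show ¬((6:Fin 7) = 4) from by decide, show ¬((6:Fin 7) = 5) from by decide]
  · rw [inner_E7, Fin.sum_univ_seven]
    simp (config := { decide := true }) only [xi, PiLp.toLp_apply]
    norm_num [show ¬((1:Fin 7) = 0) from by decide, show ¬((2:Fin 7) = 0) from by decide,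
      show ¬((2:Fin 7) = 1) from by decide, show ¬((3:Fin 7) = 0) from by decide,
      show ¬((3:Fin 7) = 1) from by decide, show ¬((3:Fin 7) = 2) from by decide,
      show ¬((4:Fin 7) = 0) from by decide, show ¬((4:Fin 7) = 1) from by decide,
      show ¬((4:Fin 7) = 2) from by decide, show ¬((4:Fin 7) = 3) from by decide,
      show ¬((5:Fin 7) = 0) from by decide, show ¬((5:Fin 7) = 1) from by decide,
      show ¬((5:Fin 7) = 2) from by decide, show ¬((5:Fin 7) = 3) from by decide,
      show ¬((5:Fin 7) = 4) from by decide, show ¬((6:Fin 7) = 0) from by decide,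
      show ¬((6:Fin 7) = 1) from by decide, show ¬((6:Fin 7) = 2) from by decide,
      show ¬((6:Fin 7) = 3) from by decide, show ¬((6:Fin 7) = 4) from by decide,
      show ¬((6:Fin 7) = 5) from by decide]
    ring

lemma eta_eq_inner (x v : E7) : eta 0 x v = ⟪v, xi 0 x⟫ := by
  rw [inner_E7, Fin.sum_univ_seven]
  simp only [eta, xi, PiLp.toLp_apply]
  norm_num [show ¬((1:Fin 7) = 0) from by decide, show ¬((2:Fin 7) = 0) from by decide,
    show ¬((2:Fin 7) = 1) from by decide, show ¬((3:Fin 7) = 0) from by decide,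
    show ¬((3:Fin 7) = 1) from by decide, show ¬((3:Fin 7) = 2) from by decide,
    show ¬((4:Fin 7) = 0) from by decide, show ¬((4:Fin 7) = 1) from by decide,
    show ¬((4:Fin 7) = 2) from by decide, show ¬((4:Fin 7) = 3) from by decide,
    show ¬((5:Fin 7) = 0) from by decide, show ¬((5:Fin 7) = 1) from by decide,
    show ¬((5:Fin 7) = 2) from by decide, show ¬((5:Fin 7) = 3) from by decide,
    show ¬((5:Fin 7) = 4) from by decide, show ¬((6:Fin 7) = 0) from by decide,
    show ¬((6:Fin 7) = 1) from by decide, show ¬((6:Fin 7) = 2) from by decide,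
    show ¬((6:Fin 7) = 3) from by decide, show ¬((6:Fin 7) = 4) from by decide,
    show ¬((6:Fin 7) = 5) from by decide]
  ring

/-- the contact metric manifold (M₀, φ', ξ, η, g) has constant
sectional curvature 1 (R(X,Y)Z = g(Y,Z)X - g(X,Z)Y) and is therefore
Sasakian: it satisfies the Sasakian curvature identity
R(X,Y)ξ = η(Y)X - η(X)Y. -/
theorem stmt18 (X Y Z : E7 → E7)
    (hX : ContDiff ℝ (⊤ : ℕ∞) X) (hY : ContDiff ℝ (⊤ : ℕ∞) Y) (hZ : ContDiff ℝ (⊤ : ℕ∞) Z)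
    (hXt : ∀ z ∈ Mr 0, TangentMr z (X z)) (hYt : ∀ z ∈ Mr 0, TangentMr z (Y z))
    (hZt : ∀ z ∈ Mr 0, TangentMr z (Z z)) (x : E7) (hx : x ∈ Mr 0) :
    curv 0 X Y Z x = ⟪Y x, Z x⟫ • X x - ⟪X x, Z x⟫ • Y x ∧
    curv 0 X Y (xi 0) x = eta 0 x (Y x) • X x - eta 0 x (X x) • Y x := by
  constructor
  · exact curv_const_one X Y Z hX hY hZ hXt hYt hZt hx
  · rw [curv_const_one X Y (xi 0) hX hY xi_zero_smooth hXt hYt xi_zero_tangent hx,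
      eta_eq_inner, eta_eq_inner]
end
end
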